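/- Let K ⊂ ℝ^p be compact, s > d > 0, and set G(N) = ℰ_s(K,N)/N^{1+s/d}. Suppose 0 < ḡ := limsup_{N→∞} G(N) < ∞, and let {M_n} be an increasing sequence of naturals with G(M_n) → ḡ. Then for every ε > 0 there exist δ > 0 and M₀ < ∞ such that whenever M' ∈ ℕ and M̃ ∈ {M_n} satisfy M₀ < M̃ < M' < M̃/(1−δ), one has G(M') ≥ ḡ − ε. -/
import Mathlib

open scoped Classical

open Filter

noncomputable def rieszEnergy (p : ℕ) (s : ℝ) (ω : Finset (EuclideanSpace ℝ (Fin p))) : ℝ :=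
  ∑ x ∈ ω, ∑ y ∈ ω.erase x, dist x y ^ (-s)

noncomputable def minEnergy (p : ℕ) (s : ℝ) (K : Set (EuclideanSpace ℝ (Fin p))) (N : ℕ) : ℝ :=
  sInf ((rieszEnergy p s) '' {ω : Finset (EuclideanSpace ℝ (Fin p)) | ↑ω ⊆ K ∧ ω.card = N})

noncomputable def normEnergy (p : ℕ) (s d : ℝ) (K : Set (EuclideanSpace ℝ (Fin p)))
    (N : ℕ) : ℝ :=
  minEnergy p s K N / (N : ℝ) ^ (1 + s / d)

lemma rieszEnergy_nonneg (p : ℕ) (s : ℝ) (ω : Finset (EuclideanSpace ℝ (Fin p))) :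
    0 ≤ rieszEnergy p s ω := by
  unfold rieszEnergy
  positivity

lemma rieszEnergy_mono (p : ℕ) (s : ℝ) {ω ω' : Finset (EuclideanSpace ℝ (Fin p))}
    (h : ω ⊆ ω') : rieszEnergy p s ω ≤ rieszEnergy p s ω' := by
  unfold rieszEnergy
  refine Finset.sum_le_sum_of_subset_of_nonneg h ?_ |>.trans' ?_
  · intro x _ _; positivity
  · refine Finset.sum_le_sum fun x _ => ?_
    refine Finset.sum_le_sum_of_subset_of_nonneg (Finset.erase_subset_erase x h) ?_
    intro y _ _; positivity

lemma minEnergy_nonneg (p : ℕ) (s : ℝ) (K : Set (EuclideanSpace ℝ (Fin p))) (N : ℕ) :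
    0 ≤ minEnergy p s K N := by
  unfold minEnergy
  rcases Set.eq_empty_or_nonempty
      ((rieszEnergy p s) '' {ω : Finset (EuclideanSpace ℝ (Fin p)) | ↑ω ⊆ K ∧ ω.card = N}) with
    h | h
  · rw [h, Real.sInf_empty]
  · exact le_csInf h (by rintro x ⟨ω, -, rfl⟩; exact rieszEnergy_nonneg p s ω)

lemma minEnergy_mono (p : ℕ) (s : ℝ) {K : Set (EuclideanSpace ℝ (Fin p))} (hK : K.Infinite)
    {N N' : ℕ} (h : N ≤ N') : minEnergy p s K N ≤ minEnergy p s K N' := by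
  obtain ⟨ω₀, hω₀K, hω₀c⟩ := hK.exists_subset_card_eq N'
  have hne' : ((rieszEnergy p s) ''
      {ω : Finset (EuclideanSpace ℝ (Fin p)) | ↑ω ⊆ K ∧ ω.card = N'}).Nonempty :=
    ⟨_, ⟨ω₀, ⟨hω₀K, hω₀c⟩, rfl⟩⟩
  refine le_csInf hne' ?_
  rintro x ⟨ω', ⟨hω'K, hω'c⟩, rfl⟩
  obtain ⟨ω, hsub, hc⟩ := Finset.exists_subset_card_eq (hω'c ▸ h)
  calc minEnergy p s K N ≤ rieszEnergy p s ω := by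
        refine csInf_le ⟨0, ?_⟩ ⟨ω, ⟨(Finset.coe_subset.2 hsub).trans hω'K, hc⟩, rfl⟩
        rintro x ⟨ω'', -, rfl⟩; exact rieszEnergy_nonneg p s ω''
    _ ≤ rieszEnergy p s ω' := rieszEnergy_mono p s hsub

/-- Near a subsequence realizing the limsup of `G`, slightly larger `M'` also give
values of `G` close to the limsup. -/
theorem stmt11 (p : ℕ) (K : Set (EuclideanSpace ℝ (Fin p))) (hK : IsCompact K)
    (s d : ℝ) (hd : 0 < d) (hsd : d < s)
    (hbd : IsBoundedUnder (· ≤ ·) atTop (fun N : ℕ => normEnergy p s d K N))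
    (hpos : 0 < limsup (fun N : ℕ => normEnergy p s d K N) atTop)
    (M : ℕ → ℕ) (hM : StrictMono M)
    (hconv : Tendsto (fun n => normEnergy p s d K (M n)) atTop
      (nhds (limsup (fun N : ℕ => normEnergy p s d K N) atTop))) :
    ∀ ε : ℝ, 0 < ε → ∃ δ : ℝ, 0 < δ ∧ δ < 1 ∧ ∃ M₀ : ℕ,
      ∀ (n : ℕ) (M' : ℕ), M₀ < M n → M n < M' → (M' : ℝ) < (M n : ℝ) / (1 - δ) →
        limsup (fun N : ℕ => normEnergy p s d K N) atTop - ε ≤ normEnergy p s d K M' := by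
  intro ε hε
  set g := limsup (fun N : ℕ => normEnergy p s d K N) atTop with hg
  -- K must be infinite
  have hKinf : K.Infinite := by
    by_contra hfin
    rw [Set.not_infinite] at hfin
    have hzero : ∀ N : ℕ, hfin.toFinset.card < N → normEnergy p s d K N = 0 := by
      intro N hN
      have : {ω : Finset (EuclideanSpace ℝ (Fin p)) | ↑ω ⊆ K ∧ ω.card = N} = ∅ := by
        ext ω; simp only [Set.mem_setOf_eq, Set.mem_empty_iff_false, iff_false, not_and]
        intro hsub hcard
        have : ω ⊆ hfin.toFinset := fun x hx => hfin.mem_toFinset.2 (hsub hx)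
        exact absurd (hcard ▸ Finset.card_le_card this) (not_le.2 hN)
      unfold normEnergy minEnergy
      rw [this, Set.image_empty, Real.sInf_empty, zero_div]
    have heq : (fun N : ℕ => normEnergy p s d K N) =ᶠ[atTop] (fun _ => (0 : ℝ)) := by
      filter_upwards [eventually_gt_atTop hfin.toFinset.card] with N hN
      exact hzero N hN
    have : g = 0 := by
      rw [hg, limsup_congr heq, limsup_const]
    exact absurd this (ne_of_gt hpos)
  set α : ℝ := 1 + s / d with hα
  clear_value α
  have hα1 : 1 ≤ α := by
    have : 0 < s / d := div_pos (hd.trans hsd) hd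
    linarith
  have hαpos : 0 < α := lt_of_lt_of_le one_pos hα1
  set c : ℝ := g - ε / 2 with hc
  clear_value c
  -- choose δ
  rcases le_or_gt c 0 with hcle | hcpos
  · -- trivial case : g - ε ≤ 0 ≤ normEnergy
    refine ⟨1/2, by norm_num, by norm_num, 0, fun n M' _ _ _ => ?_⟩
    have h0 : 0 ≤ normEnergy p s d K M' := by
      unfold normEnergy
      have := minEnergy_nonneg p s K M'
      positivity
    have hgε : g - ε ≤ 0 := by linarith
    linarith
  · set δ : ℝ := min (1/2) (ε / (2 * α * c)) with hδ
    have hδpos : 0 < δ := lt_min (by norm_num) (by positivity)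
    have hδhalf : δ ≤ 1/2 := min_le_left _ _
    have hδ1 : δ < 1 := lt_of_le_of_lt hδhalf (by norm_num)
    -- choose M₀
    have hconv' : ∀ᶠ n in atTop, c ≤ normEnergy p s d K (M n) := by
      have h' : ∀ᶠ x in nhds g, g - ε/2 ≤ x := eventually_ge_nhds (by linarith)
      have := hconv.eventually h'
      simpa [← hc] using this
    obtain ⟨n₀, hn₀⟩ := eventually_atTop.1 hconv'
    refine ⟨δ, hδpos, hδ1, M n₀, fun n M' hM₀ hMn hM' => ?_⟩
    have hn : n₀ ≤ n := by
      by_contra hcon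
      push_neg at hcon
      exact absurd (hM.monotone (le_of_lt hcon) : M n ≤ M n₀) (not_le.2 hM₀)
    have hGMn : c ≤ normEnergy p s d K (M n) := hn₀ n hn
    have hMnpos : 0 < (M n : ℝ) := by
      have : 0 < M n := Nat.lt_of_le_of_lt (Nat.zero_le _) hM₀
      exact_mod_cast this
    have hM'pos : 0 < (M' : ℝ) := by
      have : 0 < M' := Nat.lt_of_le_of_lt (Nat.zero_le _) hMn
      exact_mod_cast this
    have h1δ : (0:ℝ) < 1 - δ := by linarith
    -- ratio bound : 1 - δ ≤ M n / M'
    have hratio : 1 - δ ≤ (M n : ℝ) / (M' : ℝ) := by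
      rw [le_div_iff₀ hM'pos]
      have := (lt_div_iff₀ h1δ).1 hM'
      linarith
    -- monotonicity of minEnergy
    have hmin : minEnergy p s K (M n) ≤ minEnergy p s K M' :=
      minEnergy_mono p s hKinf (le_of_lt hMn)
    have hmin0 : 0 ≤ minEnergy p s K (M n) := minEnergy_nonneg p s K (M n)
    have hkey : normEnergy p s d K (M n) * ((M n : ℝ) / (M' : ℝ)) ^ α ≤
        normEnergy p s d K M' := by
      have heq : normEnergy p s d K (M n) * ((M n : ℝ) / (M' : ℝ)) ^ α =
          minEnergy p s K (M n) / (M' : ℝ) ^ α := by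
        unfold normEnergy
        rw [← hα, Real.div_rpow hMnpos.le hM'pos.le]
        have hMα : ((M n : ℝ)) ^ α ≠ 0 := (Real.rpow_pos_of_pos hMnpos α).ne'
        field_simp
      rw [heq]
      unfold normEnergy
      rw [← hα]
      exact div_le_div_of_nonneg_right hmin (Real.rpow_pos_of_pos hM'pos α).le
    -- Bernoulli : (1-δ)^α ≥ 1 - α δ
    have hbern : 1 - α * δ ≤ (1 - δ) ^ α := by
      have := one_add_mul_self_le_rpow_one_add (s := -δ) (by linarith) hα1
      simpa [sub_eq_add_neg, mul_comm] using this
    have hrpow : (1 - δ) ^ α ≤ ((M n : ℝ) / (M' : ℝ)) ^ α :=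
      Real.rpow_le_rpow h1δ.le hratio hαpos.le
    have hcδ : c * (α * δ) ≤ ε / 2 := by
      have hδ2 : δ ≤ ε / (2 * α * c) := min_le_right _ _
      have : c * (α * δ) ≤ c * (α * (ε / (2 * α * c))) := by
        have := mul_le_mul_of_nonneg_left hδ2 hαpos.le
        exact mul_le_mul_of_nonneg_left this hcpos.le
      calc c * (α * δ) ≤ c * (α * (ε / (2 * α * c))) := this
        _ = ε / 2 := by field_simp
    have hchain : g - ε ≤ normEnergy p s d K M' := by
      have h1 : c * (1 - α * δ) ≤ c * ((M n : ℝ) / (M' : ℝ)) ^ α :=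
        mul_le_mul_of_nonneg_left (hbern.trans hrpow) hcpos.le
      have h2 : c * ((M n : ℝ) / (M' : ℝ)) ^ α ≤
          normEnergy p s d K (M n) * ((M n : ℝ) / (M' : ℝ)) ^ α := by
        have hpow0 : 0 ≤ ((M n : ℝ) / (M' : ℝ)) ^ α := Real.rpow_nonneg (by positivity) α
        exact mul_le_mul_of_nonneg_right hGMn hpow0
      have : g - ε ≤ c * (1 - α * δ) := by
        rw [hc]; nlinarith
      linarith [this.trans (h1.trans (h2.trans hkey))]
    exact hchain
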